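/- Assume there are constants 0 < b ≤ B such that b ≤ Λ*_t(y) ≤ B for every t and every y with p(y) > 0. Then for every vector v ∈ ℝ^{N'}, E[Σ_{t=1}^{N} ⟨ξ_t(y), v⟩²] ≥ ρ_s·‖v‖₂², where ρ_s = b·T·e^{−h·b}·e^{−h·B·(N'−1)} and T = N·h; equivalently, the matrix E[Σ_{t=1}^{N} ξ_t(y) ⊗ ξ_t(y)] − ρ_s·I_{N'} is positive semidefinite. -/

import Mathlib

/-!
Fix `t ∈ [1, N]` and a lag `l`. The event that `ξ_t(y)` is the `l`-th unit vector (one event at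
`t - l` and none elsewhere in `[t - N', t - 1]`) has probability at least
`(1 - e^{-hb}) e^{-hB(N'-1)}`: by the chain rule, given any past, an event occurs with
probability `1 - e^{-hΛ} ≥ 1 - e^{-hb}` and fails to occur with probability `e^{-hΛ} ≥ e^{-hB}`.
These events are disjoint for different `l` and on each of them `⟨ξ_t, v⟩² = v_l²`, so
`E ⟨ξ_t, v⟩² ≥ (1 - e^{-hb}) e^{-hB(N'-1)} ‖v‖²`. Summing over `t` and using
`1 - e^{-x} ≥ x e^{-x}` gives the bound.

The intensity bounds, assumed only on histories of positive probability, hold on all histories: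
at the first time where they fail on some history, they also fail on the history that agrees with
it before that time and has no later events, and that history has positive probability.
-/

open Finset
open scoped BigOperators RealInnerProductSpace

noncomputable section

/-- Real value of a Boolean: `1` if `true`, `0` if `false`. -/
def bval (b : Bool) : ℝ := if b then 1 else 0

/-- The time window of indices `-N'+1, …, N`. -/
def window (N N' : ℕ) : Finset ℤ := Finset.Icc (-(N' : ℤ) + 1) (N : ℤ)

/-- The probability mass function of the discrete-time Bernoulli process with
true conditional intensities `Λ`. -/
def seqPMF (N N' : ℕ) (h : ℝ) (Λ : ℤ → (ℤ → Bool) → ℝ) (y : ℤ → Bool) : ℝ :=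
  ∏ t ∈ window N N',
    ((1 - bval (y t)) * Real.exp (-(h * Λ t y))
      + bval (y t) * (1 - Real.exp (-(h * Λ t y))))

/-- Extension of a window-indexed binary sequence to all of `ℤ` (by `false`). -/
def extSeq (N N' : ℕ) (w : ↥(window N N') → Bool) : ℤ → Bool :=
  fun i => if hi : i ∈ window N N' then w ⟨i, hi⟩ else false

/-- Expectation with respect to the law of the process. -/
def expect (N N' : ℕ) (h : ℝ) (Λ : ℤ → (ℤ → Bool) → ℝ) (f : (ℤ → Bool) → ℝ) : ℝ :=
  ∑ w : ↥(window N N') → Bool, seqPMF N N' h Λ (extSeq N N' w) * f (extSeq N N' w)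

/-- The link function `φ(x) = 1 - e^{-x}`. -/
def phi (x : ℝ) : ℝ := 1 - Real.exp (-x)

/-- Expectation of a vector-valued statistic with respect to the law of the process. -/
def expectVec {E : Type*} [AddCommMonoid E] [Module ℝ E]
    (N N' : ℕ) (h : ℝ) (Λ : ℤ → (ℤ → Bool) → ℝ) (f : (ℤ → Bool) → E) : E :=
  ∑ w : ↥(window N N') → Bool, seqPMF N N' h Λ (extSeq N N' w) • f (extSeq N N' w)

/-- The history vector `ξ_t(y) ∈ ℝ^{N'}` with `l`-th entry `y_{t-l}`,
`l = 1, …, N'` (here the index `l : Fin N'` represents `l+1`). -/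
def xi (N' : ℕ) (t : ℤ) (y : ℤ → Bool) : EuclideanSpace ℝ (Fin N') :=
  WithLp.toLp 2 (fun l : Fin N' => bval (y (t - ((l : ℕ) + 1 : ℕ))))


open Function

/-- `G s y` is the conditional probability of the value `y s` given the past `y i`, `i < s`. -/
structure IsCausalBernoulliOn (S : Finset ℤ) (G : ℤ → (ℤ → Bool) → ℝ) : Prop where
  nonneg : ∀ s ∈ S, ∀ y, 0 ≤ G s y
  update_of_lt : ∀ s ∈ S, ∀ y a x, s < a → G s (update y a x) = G s y
  sum_update : ∀ s ∈ S, ∀ y, ∑ x : Bool, G s (update y s x) = 1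

theorem IsCausalBernoulliOn.mono {S S' : Finset ℤ} {G : ℤ → (ℤ → Bool) → ℝ}
    (hG : IsCausalBernoulliOn S G) (hS : S' ⊆ S) : IsCausalBernoulliOn S' G :=
  ⟨fun s hs => hG.nonneg s (hS hs), fun s hs => hG.update_of_lt s (hS hs),
    fun s hs => hG.sum_update s (hS hs)⟩

def eventSeq (A : Finset ℤ) : ℤ → Bool := fun i => decide (i ∈ A)

theorem update_eventSeq_false {A : Finset ℤ} {a : ℤ} (ha : a ∉ A) :
    update (eventSeq A) a false = eventSeq A := by
  funext i
  by_cases hi : i = a <;> simp [eventSeq, hi, ha]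

theorem eventSeq_insert (A : Finset ℤ) (a : ℤ) :
    eventSeq (insert a A) = update (eventSeq A) a true := by
  funext i
  by_cases hi : i = a <;> simp [eventSeq, hi]

def patternInd (P : Finset ℤ) (π y : ℤ → Bool) : ℝ :=
  if ∀ i ∈ P, y i = π i then 1 else 0

theorem patternInd_nonneg (P : Finset ℤ) (π y : ℤ → Bool) : 0 ≤ patternInd P π y := by
  unfold patternInd
  positivity

theorem patternInd_update_of_notMem {P : Finset ℤ} {π y : ℤ → Bool} {a : ℤ} (ha : a ∉ P)
    (x : Bool) : patternInd P π (update y a x) = patternInd P π y := by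
  unfold patternInd
  congr 1
  exact propext <| forall₂_congr fun i hi => by rw [update_of_ne (ne_of_mem_of_not_mem hi ha)]

theorem patternInd_update_of_mem {P : Finset ℤ} {π y : ℤ → Bool} {a : ℤ} (ha : a ∈ P)
    (x : Bool) :
    patternInd P π (update y a x) = if x = π a then patternInd (P.erase a) π y else 0 := by
  have : (∀ i ∈ P, update y a x i = π i) ↔ x = π a ∧ ∀ i ∈ P.erase a, y i = π i := by
    rw [← Finset.insert_erase ha, Finset.forall_mem_insert, update_self,
      Finset.erase_insert_eq_erase, Finset.erase_eq_of_notMem (Finset.notMem_erase a P)]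
    refine and_congr_right fun _ => forall₂_congr fun i hi => ?_
    rw [update_of_ne (Finset.ne_of_mem_erase hi)]
  simp only [patternInd, this, ite_and]

namespace IsCausalBernoulliOn

variable {G : ℤ → (ℤ → Bool) → ℝ} {S : Finset ℤ} {a : ℤ}

theorem add_insert_max (hG : IsCausalBernoulliOn (insert a S) G) (hlt : ∀ s ∈ S, s < a)
    {A : Finset ℤ} (hA : A ⊆ S) (f : (ℤ → Bool) → ℝ) :
    (∏ s ∈ insert a S, G s (eventSeq A)) * f (eventSeq A)
        + (∏ s ∈ insert a S, G s (eventSeq (insert a A))) * f (eventSeq (insert a A))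
      = (∏ s ∈ S, G s (eventSeq A)) *
          ∑ x : Bool, G a (update (eventSeq A) a x) * f (update (eventSeq A) a x) := by
  have ha : a ∉ S := fun h => lt_irrefl a (hlt a h)
  have hfuture : ∏ s ∈ S, G s (update (eventSeq A) a true) = ∏ s ∈ S, G s (eventSeq A) :=
    Finset.prod_congr rfl fun s hs =>
      hG.update_of_lt s (Finset.mem_insert_of_mem hs) _ a true (hlt s hs)
  rw [eventSeq_insert, Fintype.sum_bool, update_eventSeq_false fun h => ha (hA h),
    Finset.prod_insert ha, Finset.prod_insert ha, hfuture]
  ring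

/-- The right-hand side is the probability that `y` agrees with `π` on `P`. -/
theorem prod_le_sum_patternInd (hG : IsCausalBernoulliOn S G) {P : Finset ℤ} (hPS : P ⊆ S)
    {π : ℤ → Bool} {c : ℤ → ℝ} (hc0 : ∀ s ∈ P, 0 ≤ c s)
    (hc : ∀ s ∈ P, ∀ y, y s = π s → c s ≤ G s y) :
    ∏ s ∈ P, c s ≤
      ∑ A ∈ S.powerset, (∏ s ∈ S, G s (eventSeq A)) * patternInd P π (eventSeq A) := by
  induction S using Finset.induction_on_max generalizing P with
  | empty => simp [Finset.subset_empty.1 hPS, patternInd]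
  | insert a S hlt ih =>
    have ha : a ∉ S := fun h => lt_irrefl a (hlt a h)
    have hGS := hG.mono (Finset.subset_insert a S)
    rw [Finset.sum_powerset_insert ha, ← Finset.sum_add_distrib]
    by_cases haP : a ∈ P
    · have hPS' : P.erase a ⊆ S := fun i hi =>
        (Finset.mem_insert.1 (hPS (Finset.mem_of_mem_erase hi))).resolve_left
          (Finset.ne_of_mem_erase hi)
      calc ∏ s ∈ P, c s = c a * ∏ s ∈ P.erase a, c s := (Finset.mul_prod_erase P c haP).symm
        _ ≤ c a * ∑ A ∈ S.powerset,
              (∏ s ∈ S, G s (eventSeq A)) * patternInd (P.erase a) π (eventSeq A) :=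
          mul_le_mul_of_nonneg_left (ih hGS hPS' (fun s hs => hc0 s (Finset.mem_of_mem_erase hs))
            (fun s hs => hc s (Finset.mem_of_mem_erase hs))) (hc0 a haP)
        _ ≤ _ := by
          rw [Finset.mul_sum]
          refine Finset.sum_le_sum fun A hA => ?_
          rw [hG.add_insert_max hlt (Finset.mem_powerset.1 hA)]
          simp only [patternInd_update_of_mem haP, mul_ite, mul_zero, Fintype.sum_ite_eq']
          have hca := hc a haP (update (eventSeq A) a (π a)) (update_self _ _ _)
          have hR : 0 ≤ ∏ s ∈ S, G s (eventSeq A) :=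
            Finset.prod_nonneg fun s hs => hGS.nonneg s hs _
          rw [mul_left_comm]
          exact mul_le_mul_of_nonneg_left
            (mul_le_mul_of_nonneg_right hca (patternInd_nonneg _ _ _)) hR
    · have hPS' : P ⊆ S := fun i hi =>
        (Finset.mem_insert.1 (hPS hi)).resolve_left (ne_of_mem_of_not_mem hi haP)
      refine (ih hGS hPS' hc0 hc).trans_eq (Finset.sum_congr rfl fun A hA => ?_)
      rw [hG.add_insert_max hlt (Finset.mem_powerset.1 hA)]
      simp only [patternInd_update_of_notMem haP, ← Finset.sum_mul,
        hG.sum_update a (Finset.mem_insert_self a S), one_mul]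

end IsCausalBernoulliOn

section Intensity

variable (h : ℝ) (Λ : ℤ → (ℤ → Bool) → ℝ)

def bernoulliFactor (t : ℤ) (y : ℤ → Bool) : ℝ :=
  (1 - bval (y t)) * Real.exp (-(h * Λ t y)) + bval (y t) * (1 - Real.exp (-(h * Λ t y)))

variable {h Λ}

theorem bernoulliFactor_of_false {t : ℤ} {y : ℤ → Bool} (hy : y t = false) :
    bernoulliFactor h Λ t y = Real.exp (-(h * Λ t y)) := by
  simp [bernoulliFactor, hy, bval]

theorem bernoulliFactor_of_true {t : ℤ} {y : ℤ → Bool} (hy : y t = true) :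
    bernoulliFactor h Λ t y = 1 - Real.exp (-(h * Λ t y)) := by
  simp [bernoulliFactor, hy, bval]

theorem bernoulliFactor_pos {t : ℤ} {y : ℤ → Bool} (hy : y t = true → 0 < h * Λ t y) :
    0 < bernoulliFactor h Λ t y := by
  cases hyt : y t
  · rw [bernoulliFactor_of_false hyt]; exact Real.exp_pos _
  · rw [bernoulliFactor_of_true hyt, sub_pos, Real.exp_lt_one_iff, neg_lt_zero]; exact hy hyt

theorem bernoulliFactor_nonneg {t : ℤ} {y : ℤ → Bool} (hy : 0 ≤ h * Λ t y) :
    0 ≤ bernoulliFactor h Λ t y := by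
  cases hyt : y t
  · rw [bernoulliFactor_of_false hyt]; exact (Real.exp_pos _).le
  · rw [bernoulliFactor_of_true hyt, sub_nonneg, Real.exp_le_one_iff, neg_nonpos]; exact hy

variable {N N' : ℕ}

theorem intensity_update_of_le
    (hdep : ∀ (t : ℤ) (y y' : ℤ → Bool),
      (∀ i ∈ window N N', i < t → y i = y' i) → Λ t y = Λ t y')
    {t a : ℤ} (hta : t ≤ a) (y : ℤ → Bool) (x : Bool) : Λ t (update y a x) = Λ t y :=
  hdep t _ _ fun i _ hi => update_of_ne (by omega) x y

theorem isCausalBernoulliOn_window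
    (hdep : ∀ (t : ℤ) (y y' : ℤ → Bool),
      (∀ i ∈ window N N', i < t → y i = y' i) → Λ t y = Λ t y')
    (hΛ : ∀ t ∈ window N N', ∀ y, 0 ≤ h * Λ t y) :
    IsCausalBernoulliOn (window N N') (bernoulliFactor h Λ) where
  nonneg s hs y := bernoulliFactor_nonneg (hΛ s hs y)
  update_of_lt s _ y a x hsa := by
    simp only [bernoulliFactor, update_of_ne hsa.ne, intensity_update_of_le hdep hsa.le]
  sum_update s _ y := by
    simp [bernoulliFactor, bval, intensity_update_of_le hdep le_rfl]

theorem intensity_mem_Icc (hh : 0 < h)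
    (hdep : ∀ (t : ℤ) (y y' : ℤ → Bool),
      (∀ i ∈ window N N', i < t → y i = y' i) → Λ t y = Λ t y')
    {b B : ℝ} (hb : 0 < b)
    (hstar : ∀ t ∈ window N N', ∀ y : ℤ → Bool,
      0 < seqPMF N N' h Λ y → b ≤ Λ t y ∧ Λ t y ≤ B) :
    ∀ t ∈ window N N', ∀ y, b ≤ Λ t y ∧ Λ t y ≤ B := by
  by_contra! hbad
  obtain ⟨t, ⟨htW, y, hy⟩, hmin⟩ := Int.exists_least_of_bdd
    (P := fun t => t ∈ window N N' ∧ ∃ y, ¬(b ≤ Λ t y ∧ Λ t y ≤ B))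
    ⟨-(N' : ℤ) + 1, fun t ht => (Finset.mem_Icc.1 ht.1).1⟩
    (by obtain ⟨t, ht, y, hy⟩ := hbad; exact ⟨t, ht, y, fun h => (not_le.2 (hy h.1)) h.2⟩)
  set y' : ℤ → Bool := fun i => decide (i < t) && y i
  have hpast : ∀ i ∈ window N N', i < t → y i = y' i := fun i _ hi => by simp [y', hi]
  have hpos : 0 < seqPMF N N' h Λ y' :=
    Finset.prod_pos fun s hs => bernoulliFactor_pos fun hys => by
      have hst : s < t := by simp only [y', Bool.and_eq_true, decide_eq_true_eq] at hys; exact hys.1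
      have : b ≤ Λ s y' := by
        by_contra hlt
        exact absurd (hmin s ⟨hs, y', fun h => hlt h.1⟩) (not_le.2 hst)
      nlinarith
  exact hy (hdep t y y' hpast ▸ hstar t htW y' hpos)

end Intensity

theorem sum_sq_mul_ite_eq_single_le_inner_sq {ι : Type*} [Fintype ι] [DecidableEq ι]
    (x v : EuclideanSpace ℝ ι) :
    ∑ l, v l ^ 2 * (if x = EuclideanSpace.single l 1 then 1 else 0) ≤ ⟪x, v⟫ ^ 2 := by
  by_cases hx : ∃ l, x = EuclideanSpace.single l 1
  · obtain ⟨l₀, rfl⟩ := hx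
    rw [Finset.sum_eq_single l₀ (fun l _ hl => by
      rw [if_neg fun h => hl (by simpa using congrArg (fun x => x l) h), mul_zero]) (by simp),
      EuclideanSpace.inner_single_left]
    simp
  · push Not at hx
    simp only [hx, if_false, mul_zero, Finset.sum_const_zero]
    positivity

theorem bval_eq_ite_iff {x : Bool} {p : Prop} [Decidable p] :
    bval x = (if p then 1 else 0) ↔ x = decide p := by
  by_cases hp : p <;> cases x <;> simp [bval, hp]

theorem xi_eq_single_iff {N' : ℕ} {t : ℤ} {y : ℤ → Bool} {l : Fin N'} :
    xi N' t y = EuclideanSpace.single l 1 ↔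
      ∀ j : Fin N', y (t - ((j : ℕ) + 1 : ℕ)) = decide (j = l) := by
  rw [WithLp.ext_iff, funext_iff]
  refine forall_congr' fun j => ?_
  rw [PiLp.ofLp_single, Pi.single_apply]
  exact bval_eq_ite_iff

section Expectation

variable {N N' : ℕ} {h : ℝ} {Λ : ℤ → (ℤ → Bool) → ℝ}

theorem sum_extSeq_eq_sum_powerset (F : (ℤ → Bool) → ℝ) :
    ∑ w : ↥(window N N') → Bool, F (extSeq N N' w) =
      ∑ A ∈ (window N N').powerset, F (eventSeq A) := by
  refine Finset.sum_bij' (fun w _ => (window N N').filter (extSeq N N' w ·))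
    (fun A _ s => decide ((s : ℤ) ∈ A))
    (fun w _ => Finset.mem_powerset.2 (Finset.filter_subset _ _))
    (fun _ _ => Finset.mem_univ _) (fun w _ => ?_) (fun A hA => ?_) (fun w _ => ?_)
  · funext s
    simp [extSeq, s.2]
  · ext i
    have hiW : i ∈ A → i ∈ window N N' := fun hi => Finset.mem_powerset.1 hA hi
    by_cases hi : i ∈ window N N' <;> simp_all [extSeq]
  · congr 1
    funext i
    by_cases hi : i ∈ window N N' <;> simp [extSeq, eventSeq, hi]

theorem expect_eq_sum_powerset (f : (ℤ → Bool) → ℝ) :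
    expect N N' h Λ f = ∑ A ∈ (window N N').powerset,
      (∏ t ∈ window N N', bernoulliFactor h Λ t (eventSeq A)) * f (eventSeq A) :=
  sum_extSeq_eq_sum_powerset (fun y => seqPMF N N' h Λ y * f y)

theorem expect_sum {ι : Type*} (s : Finset ι) (f : ι → (ℤ → Bool) → ℝ) :
    expect N N' h Λ (fun y => ∑ i ∈ s, f i y) = ∑ i ∈ s, expect N N' h Λ (f i) := by
  simp only [_root_.expect, Finset.mul_sum]
  exact Finset.sum_comm

theorem expect_const_mul (c : ℝ) (f : (ℤ → Bool) → ℝ) :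
    expect N N' h Λ (fun y => c * f y) = c * expect N N' h Λ f := by
  simp only [_root_.expect, Finset.mul_sum]
  exact Finset.sum_congr rfl fun _ _ => by ring

theorem expect_mono (hp : ∀ y, 0 ≤ seqPMF N N' h Λ y) {f g : (ℤ → Bool) → ℝ}
    (hfg : ∀ y, f y ≤ g y) : expect N N' h Λ f ≤ expect N N' h Λ g :=
  Finset.sum_le_sum fun _ _ => mul_le_mul_of_nonneg_left (hfg _) (hp _)

end Expectation

theorem mul_exp_neg_le_one_sub_exp_neg (x : ℝ) : x * Real.exp (-x) ≤ 1 - Real.exp (-x) := by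
  have h1 := Real.add_one_le_exp x
  have h2 : Real.exp (-x) * Real.exp x = 1 := by rw [← Real.exp_add, neg_add_cancel, Real.exp_zero]
  nlinarith [Real.exp_pos (-x)]

theorem expect_xi_eq_single_ge {N N' : ℕ} {h : ℝ} {Λ : ℤ → (ℤ → Bool) → ℝ} (hh : 0 ≤ h)
    (hG : IsCausalBernoulliOn (window N N') (bernoulliFactor h Λ)) {b B : ℝ} (hb : 0 ≤ b)
    (hΛ : ∀ t ∈ window N N', ∀ y, b ≤ Λ t y ∧ Λ t y ≤ B)
    {t : ℤ} (ht : t ∈ Finset.Icc (1 : ℤ) N) (l : Fin N') :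
    (1 - Real.exp (-(h * b))) * Real.exp (-(h * B * ((N' : ℝ) - 1))) ≤
      expect N N' h Λ (fun y => if xi N' t y = EuclideanSpace.single l 1 then 1 else 0) := by
  set τ : Fin N' → ℤ := fun j => t - ((j : ℕ) + 1 : ℕ)
  have hτ : Injective τ := fun i j hij => by
    simp only [τ, sub_right_inj, Nat.cast_inj, add_left_inj] at hij
    exact Fin.ext hij
  set P := Finset.univ.image τ
  have hPW : P ⊆ window N N' := by
    intro s hs
    obtain ⟨j, -, rfl⟩ := Finset.mem_image.1 hs
    have := j.isLt
    simp only [Finset.mem_Icc] at ht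
    simp only [window, τ, Finset.mem_Icc]
    omega
  set c : ℤ → ℝ := fun s => if s = τ l then 1 - Real.exp (-(h * b)) else Real.exp (-(h * B))
  have hcP : ∏ s ∈ P, c s = (1 - Real.exp (-(h * b))) * Real.exp (-(h * B * ((N' : ℝ) - 1))) := by
    have hN' : ((N' - 1 : ℕ) : ℝ) = (N' : ℝ) - 1 := by
      rw [Nat.cast_sub (Nat.one_le_of_lt l.isLt), Nat.cast_one]
    rw [Finset.prod_image hτ.injOn, Fintype.prod_eq_mul_prod_compl l]
    simp only [c, hτ.eq_iff, if_pos rfl]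
    rw [Finset.prod_congr rfl fun j hj => if_neg (Finset.mem_compl.1 hj ∘ Finset.mem_singleton.2),
      Finset.prod_const, Finset.card_compl, Finset.card_singleton, Fintype.card_fin,
      ← Real.exp_nat_mul, hN']
    ring_nf
  have hpat : ∀ y, (if xi N' t y = EuclideanSpace.single l 1 then (1 : ℝ) else 0) =
      patternInd P (fun i => decide (i = τ l)) y := by
    intro y
    simp only [patternInd, xi_eq_single_iff, P, Finset.forall_mem_image, Finset.mem_univ,
      true_implies, hτ.eq_iff]
    rfl
  rw [← hcP, expect_eq_sum_powerset]
  simp only [hpat]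
  refine hG.prod_le_sum_patternInd hPW (fun s _ => ?_) (fun s hs y hy => ?_)
  · have : 0 ≤ 1 - Real.exp (-(h * b)) := by
      rw [sub_nonneg, Real.exp_le_one_iff, neg_nonpos]; positivity
    simp only [c]; split_ifs <;> positivity
  · obtain ⟨hbs, hsB⟩ := hΛ s (hPW hs) y
    simp only [c]
    split_ifs with hsl
    · rw [bernoulliFactor_of_true (by simpa [hsl] using hy)]
      gcongr
    · rw [bernoulliFactor_of_false (by simpa [hsl] using hy)]
      gcongr

theorem xi_xi_positive_general
    (N N' : ℕ) (h : ℝ) (hh : 0 < h)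
    (Λ : ℤ → (ℤ → Bool) → ℝ)
    (hdep : ∀ (t : ℤ) (y y' : ℤ → Bool),
      (∀ i ∈ window N N', i < t → y i = y' i) → Λ t y = Λ t y')
    (b B : ℝ) (hb : 0 < b)
    (hstar : ∀ t ∈ window N N', ∀ y : ℤ → Bool,
      0 < seqPMF N N' h Λ y → b ≤ Λ t y ∧ Λ t y ≤ B) :
    ∀ v : EuclideanSpace ℝ (Fin N'),
      expect N N' h Λ (fun y => ∑ t ∈ Finset.Icc (1 : ℤ) (N : ℤ), ⟪xi N' t y, v⟫ ^ 2)
        ≥ (b * ((N : ℝ) * h) * Real.exp (-(h * b))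
            * Real.exp (-(h * B * ((N' : ℝ) - 1)))) * ‖v‖ ^ 2 := by
  intro v
  have hΛ := intensity_mem_Icc hh hdep hb hstar
  have hG := isCausalBernoulliOn_window hdep fun t ht y =>
    mul_nonneg hh.le (hb.le.trans (hΛ t ht y).1)
  calc (b * ((N : ℝ) * h) * Real.exp (-(h * b)) * Real.exp (-(h * B * ((N' : ℝ) - 1)))) * ‖v‖ ^ 2
      = N * (h * b * Real.exp (-(h * b))) * Real.exp (-(h * B * ((N' : ℝ) - 1))) * ‖v‖ ^ 2 := by
        ring
    _ ≤ N * (1 - Real.exp (-(h * b))) * Real.exp (-(h * B * ((N' : ℝ) - 1))) * ‖v‖ ^ 2 := by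
        gcongr
        exact mul_exp_neg_le_one_sub_exp_neg _
    _ = ∑ t ∈ Finset.Icc (1 : ℤ) N, ∑ l,
          v l ^ 2 * ((1 - Real.exp (-(h * b))) * Real.exp (-(h * B * ((N' : ℝ) - 1)))) := by
        rw [EuclideanSpace.real_norm_sq_eq, Finset.sum_const, Int.card_Icc, ← Finset.sum_mul]
        simp only [add_sub_cancel_right, Int.toNat_natCast, nsmul_eq_mul]
        ring
    _ ≤ ∑ t ∈ Finset.Icc (1 : ℤ) N, ∑ l, v l ^ 2 *
          expect N N' h Λ (fun y => if xi N' t y = EuclideanSpace.single l 1 then 1 else 0) := by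
        gcongr with t ht l
        exact expect_xi_eq_single_ge hh.le hG hb.le hΛ ht l
    _ = expect N N' h Λ (fun y => ∑ t ∈ Finset.Icc (1 : ℤ) N, ∑ l,
          v l ^ 2 * if xi N' t y = EuclideanSpace.single l 1 then 1 else 0) := by
        simp only [expect_sum, expect_const_mul]
    _ ≤ _ := expect_mono (fun y => Finset.prod_nonneg fun t ht => hG.nonneg t ht y) fun y =>
        Finset.sum_le_sum fun t _ => sum_sq_mul_ite_eq_single_le_inner_sq _ _

/-- positive-definiteness of `E[∑_t ξ_t ⊗ ξ_t]`:
for every `v ∈ ℝ^{N'}`, `E[∑_{t=1}^N ⟨ξ_t(y), v⟩²] ≥ ρ_s ‖v‖²` with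
`ρ_s = b T e^{-h b} e^{-h B (N'-1)}` and `T = N h`. -/
theorem xi_xi_positive
    (N N' : ℕ) (hN : 1 ≤ N) (hN' : 1 ≤ N') (h : ℝ) (hh : 0 < h)
    (Λ : ℤ → (ℤ → Bool) → ℝ)
    (hdep : ∀ (t : ℤ) (y y' : ℤ → Bool),
      (∀ i ∈ window N N', i < t → y i = y' i) → Λ t y = Λ t y')
    (b B : ℝ) (hb : 0 < b) (hbB : b ≤ B)
    (hstar : ∀ t ∈ window N N', ∀ y : ℤ → Bool,
      0 < seqPMF N N' h Λ y → b ≤ Λ t y ∧ Λ t y ≤ B) :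
    ∀ v : EuclideanSpace ℝ (Fin N'),
      expect N N' h Λ (fun y => ∑ t ∈ Finset.Icc (1 : ℤ) (N : ℤ), ⟪xi N' t y, v⟫ ^ 2)
        ≥ (b * ((N : ℝ) * h) * Real.exp (-(h * b))
            * Real.exp (-(h * B * ((N' : ℝ) - 1)))) * ‖v‖ ^ 2 :=
  xi_xi_positive_general N N' h hh Λ hdep b B hb hstar
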